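/- For the Gaussian function q_κ^x(t) = (√κ/(2π)^{1/4})·exp(−κ²(t−x)²/4) and the antiderivative operator (∂₀^{-1}f)(t) = (1/2)∫_{−∞}^t f − (1/2)∫_t^∞ f, the quantity |∫_ℝ q_κ^x(t)·(κ/√(2π))·(∂₀^{-1}q_κ^y)(t) dt| is bounded by a constant independent of κ > 0 and x, y ∈ ℝ. -/

import Mathlib

open MeasureTheory Real

/-- The 1-dimensional Gaussian factor `q_κ^x`. -/
noncomputable def qGauss (κ x t : ℝ) : ℝ :=
  (Real.sqrt κ / (2 * Real.pi) ^ ((1 : ℝ) / 4)) * Real.exp (-κ ^ 2 * (t - x) ^ 2 / 4)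

/-- The half-space primitive `∂₀⁻¹ q_κ^x`. -/
noncomputable def qGaussPrim (κ x t : ℝ) : ℝ :=
  (1 / 2) * (∫ τ in Set.Iic t, qGauss κ x τ) - (1 / 2) * (∫ τ in Set.Ici t, qGauss κ x τ)

/-! Since `∂₀⁻¹` is half the difference of two partial integrals of a nonnegative function,
`|∂₀⁻¹ q_κ^y| ≤ ½ ‖q_κ^y‖₁` pointwise, so the pairing is at most
`(κ/√(2π)) · ½ ‖q_κ^x‖₁ ‖q_κ^y‖₁`. Both `L¹` norms equal `√(2√(2π)/κ)`, which makes this bound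
exactly `1`. -/

section

variable {α : Type*} [MeasurableSpace α] {μ : Measure α}

theorem abs_setIntegral_sub_setIntegral_le_integral {f : α → ℝ} (hf : Integrable f μ)
    (hf0 : 0 ≤ f) (s u : Set α) (hs : MeasurableSet s) (hu : MeasurableSet u) :
    |(∫ a in s, f a ∂μ) - ∫ a in u, f a ∂μ| ≤ ∫ a, f a ∂μ := by
  have hs_le : ∫ a in s, f a ∂μ ≤ ∫ a, f a ∂μ := setIntegral_le_integral hf (.of_forall hf0)
  have hu_le : ∫ a in u, f a ∂μ ≤ ∫ a, f a ∂μ := setIntegral_le_integral hf (.of_forall hf0)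
  have hs_nonneg : 0 ≤ ∫ a in s, f a ∂μ := setIntegral_nonneg hs fun a _ => hf0 a
  have hu_nonneg : 0 ≤ ∫ a in u, f a ∂μ := setIntegral_nonneg hu fun a _ => hf0 a
  rw [abs_sub_le_iff]
  constructor <;> linarith

theorem abs_integral_mul_le_integral_mul {f g : α → ℝ} (hf : Integrable f μ) (hf0 : 0 ≤ f)
    {M : ℝ} (hg : ∀ a, |g a| ≤ M) :
    |∫ a, f a * g a ∂μ| ≤ (∫ a, f a ∂μ) * M := by
  rw [← integral_mul_const, ← Real.norm_eq_abs]
  refine norm_integral_le_of_norm_le (hf.mul_const M) (.of_forall fun a => ?_)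
  rw [Real.norm_eq_abs, abs_mul, abs_of_nonneg (hf0 a)]
  exact mul_le_mul_of_nonneg_left (hg a) (hf0 a)

end

theorem qGauss_nonneg (κ x : ℝ) : 0 ≤ qGauss κ x := fun t => by
  unfold qGauss
  positivity

theorem qGauss_eq (κ x t : ℝ) :
    qGauss κ x t = (√κ / (2 * π) ^ ((1 : ℝ) / 4)) * exp (-(κ ^ 2 / 4) * (t - x) ^ 2) := by
  unfold qGauss
  ring_nf

theorem integrable_qGauss {κ : ℝ} (hκ : 0 < κ) (x : ℝ) : Integrable (qGauss κ x) := by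
  have hgauss : Integrable fun t : ℝ => exp (-(κ ^ 2 / 4) * t ^ 2) :=
    integrable_exp_neg_mul_sq (by positivity)
  convert (hgauss.comp_sub_right x).const_mul (√κ / (2 * π) ^ ((1 : ℝ) / 4)) using 1
  exact funext (qGauss_eq κ x)

theorem rpow_one_div_four_sq {a : ℝ} (ha : 0 ≤ a) : (a ^ ((1 : ℝ) / 4)) ^ 2 = √a := by
  rw [← rpow_natCast, ← rpow_mul ha, sqrt_eq_rpow]
  norm_num

theorem integral_qGauss {κ : ℝ} (hκ : 0 < κ) (x : ℝ) :
    ∫ t, qGauss κ x t = √(2 * √(2 * π) / κ) := by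
  simp only [qGauss_eq]
  rw [integral_const_mul, integral_sub_right_eq_self (fun t => exp (-(κ ^ 2 / 4) * t ^ 2)) x,
    integral_gaussian, eq_comm, sqrt_eq_iff_eq_sq (by positivity) (by positivity), mul_pow,
    div_pow, sq_sqrt hκ.le, sq_sqrt (by positivity),
    rpow_one_div_four_sq (by positivity)]
  have hsqrt : √(2 * π) ^ 2 = 2 * π := sq_sqrt (by positivity)
  field_simp
  linear_combination 2 * hsqrt

theorem abs_qGaussPrim_le {κ : ℝ} (hκ : 0 < κ) (y t : ℝ) :
    |qGaussPrim κ y t| ≤ (1 / 2) * ∫ τ, qGauss κ y τ := by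
  rw [qGaussPrim, ← mul_sub, abs_mul, abs_of_pos one_half_pos]
  gcongr
  exact abs_setIntegral_sub_setIntegral_le_integral (integrable_qGauss hκ y) (qGauss_nonneg κ y)
    _ _ measurableSet_Iic measurableSet_Ici

/-- `|⟨q_κ^x, (κ/√(2π)) ∂₀⁻¹ q_κ^y⟩|` is bounded by a constant independent of `κ, x, y`. -/
theorem stmt_3 :
    ∃ C : ℝ, ∀ κ : ℝ, 0 < κ → ∀ x y : ℝ,
      |∫ t : ℝ, qGauss κ x t * ((κ / Real.sqrt (2 * Real.pi)) * qGaussPrim κ y t)| ≤ C := by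
  refine ⟨1, fun κ hκ x y => ?_⟩
  set c := κ / √(2 * π) with hc_def
  have hc : 0 < c := by positivity
  have hprim : ∀ t, |c * qGaussPrim κ y t| ≤ c * ((1 / 2) * ∫ τ, qGauss κ y τ) := fun t => by
    rw [abs_mul, abs_of_pos hc]
    exact mul_le_mul_of_nonneg_left (abs_qGaussPrim_le hκ y t) hc.le
  calc _ ≤ (∫ t, qGauss κ x t) * (c * ((1 / 2) * ∫ τ, qGauss κ y τ)) :=
        abs_integral_mul_le_integral_mul (integrable_qGauss hκ x) (qGauss_nonneg κ x) hprim
    _ = c / 2 * √(2 * √(2 * π) / κ) ^ 2 := by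
        rw [integral_qGauss hκ, integral_qGauss hκ]
        ring
    _ = 1 := by
        rw [sq_sqrt (by positivity), hc_def]
        field_simp
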